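/- arXiv:2302.09810 — 3 statements merged into one kernel-verified Lean document; each statement's English description precedes it below -/
import Mathlib

section
/- The population LSEL is minimized exactly at the true posteriors: for every positive score function q : X × {1,…,K} → ℝ_{>0}, L(q) ≥ L(q*) where q*(x,k) := p(k|x), and equality holds if and only if q(x,k)/Σ_{l=1}^{K} q(x,l) = p(k|x) for all x ∈ X and all k ∈ {1,…,K}. -/
/-!
The LSEL term at `(x, k)` is `-log` of the normalized score `q (x, k) / ∑ l, q (x, l)`, so `L q`
is a sum over `x` of the cross entropy of `p (x, ·)` against the normalized scores `q (x, ·)`.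
By Gibbs' inequality, which comes from `log t ≤ t - 1` with equality only at `t = 1`, each such
cross entropy is minimized exactly when the normalized scores are the posteriors `p (· | x)`;
and `q*` normalizes to the posteriors.
-/

open Finset Real

section Gibbs

variable {ι : Type*} [Fintype ι]

lemma mul_log_div_le_sub {a b : ℝ} (ha : 0 < a) (hb : 0 < b) : a * log (b / a) ≤ b - a :=
  calc a * log (b / a) ≤ a * (b / a - 1) := by gcongr; exact log_le_sub_one_of_pos (by positivity)
    _ = b - a := by field_simp

lemma mul_log_div_eq_sub_iff {a b : ℝ} (ha : 0 < a) (hb : 0 < b) :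
    a * log (b / a) = b - a ↔ b = a := by
  refine ⟨fun h => ?_, by rintro rfl; simp⟩
  by_contra hne
  have hlt : log (b / a) < b / a - 1 :=
    log_lt_sub_one_of_pos (by positivity) (by rwa [ne_eq, div_eq_one_iff_eq ha.ne'])
  have : a * log (b / a) < a * (b / a - 1) := mul_lt_mul_of_pos_left hlt ha
  rw [mul_sub, mul_div_cancel₀ _ ha.ne', mul_one] at this
  linarith

lemma sum_mul_log_sub_sum_mul_log {a b : ι → ℝ} (ha : ∀ i, 0 < a i) (hb : ∀ i, 0 < b i) :
    ∑ i, a i * log (b i) - ∑ i, a i * log (a i) = ∑ i, a i * log (b i / a i) := by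
  rw [← sum_sub_distrib]
  refine sum_congr rfl fun i _ => ?_
  rw [log_div (hb i).ne' (ha i).ne']
  ring

theorem sum_mul_log_le_sum_mul_log {a b : ι → ℝ} (ha : ∀ i, 0 < a i) (hb : ∀ i, 0 < b i)
    (hab : ∑ i, b i ≤ ∑ i, a i) : ∑ i, a i * log (b i) ≤ ∑ i, a i * log (a i) := by
  have h : ∑ i, a i * log (b i / a i) ≤ ∑ i, (b i - a i) :=
    sum_le_sum fun i _ => mul_log_div_le_sub (ha i) (hb i)
  rw [← sum_mul_log_sub_sum_mul_log ha hb, sum_sub_distrib] at h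
  linarith

theorem sum_mul_log_eq_sum_mul_log_iff {a b : ι → ℝ}
    (ha : ∀ i, 0 < a i) (hb : ∀ i, 0 < b i)
    (hab : ∑ i, b i ≤ ∑ i, a i) :
    ∑ i, a i * log (b i) = ∑ i, a i * log (a i) ↔ b = a := by
  refine ⟨fun h => ?_, by rintro rfl; rfl⟩
  have hgap : ∀ i, 0 ≤ b i - a i - a i * log (b i / a i) := fun i =>
    sub_nonneg.2 (mul_log_div_le_sub (ha i) (hb i))
  have hgap_sum : ∑ i, (b i - a i - a i * log (b i / a i)) = 0 := by
    refine le_antisymm ?_ (sum_nonneg fun i _ => hgap i)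
    rw [sum_sub_distrib, sum_sub_distrib, ← sum_mul_log_sub_sum_mul_log ha hb, h]
    linarith
  funext i
  have := (sum_eq_zero_iff_of_nonneg fun i _ => hgap i).1 hgap_sum i (mem_univ i)
  exact (mul_log_div_eq_sub_iff (ha i) (hb i)).1 (by linarith)

end Gibbs

section CrossEntropy

variable {ι : Type*} [Fintype ι]

noncomputable def crossEntropy (w r : ι → ℝ) : ℝ := ∑ i, w i * -log (r i / ∑ j, r j)

lemma crossEntropy_div_const (w r : ι → ℝ) {c : ℝ} (hc : c ≠ 0) :
    crossEntropy w (fun i => r i / c) = crossEntropy w r := by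
  simp only [crossEntropy, ← sum_div, div_div_div_cancel_right₀ hc]

lemma crossEntropy_eq_neg_sum_mul (w r : ι → ℝ) (hw : ∑ j, w j ≠ 0) :
    crossEntropy w r = -(∑ j, w j) * ∑ i, w i / (∑ j, w j) * log (r i / ∑ j, r j) := by
  rw [crossEntropy, mul_sum]
  refine sum_congr rfl fun i _ => ?_
  field_simp

lemma sum_div_sum_self {r : ι → ℝ} (hr : ∑ j, r j ≠ 0) : ∑ i, r i / ∑ j, r j = 1 := by
  rw [← sum_div, div_self hr]

variable {w r : ι → ℝ} (hw : ∀ i, 0 < w i) (hr : ∀ i, 0 < r i)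
include hw hr

theorem crossEntropy_self_le : crossEntropy w w ≤ crossEntropy w r := by
  rcases isEmpty_or_nonempty ι with hι | hι
  · simp [crossEntropy]
  have hsw : 0 < ∑ j, w j := sum_pos (fun i _ => hw i) univ_nonempty
  have hsr : 0 < ∑ j, r j := sum_pos (fun i _ => hr i) univ_nonempty
  rw [crossEntropy_eq_neg_sum_mul w w hsw.ne', crossEntropy_eq_neg_sum_mul w r hsw.ne',
    neg_mul, neg_mul, neg_le_neg_iff]
  refine mul_le_mul_of_nonneg_left
    (sum_mul_log_le_sum_mul_log (fun i => div_pos (hw i) hsw) (fun i => div_pos (hr i) hsr) ?_)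
    hsw.le
  rw [sum_div_sum_self hsw.ne', sum_div_sum_self hsr.ne']

theorem crossEntropy_eq_self_iff :
    crossEntropy w r = crossEntropy w w ↔ ∀ i, r i / ∑ j, r j = w i / ∑ j, w j := by
  rcases isEmpty_or_nonempty ι with hι | hι
  · simp [crossEntropy]
  have hsw : 0 < ∑ j, w j := sum_pos (fun i _ => hw i) univ_nonempty
  have hsr : 0 < ∑ j, r j := sum_pos (fun i _ => hr i) univ_nonempty
  rw [crossEntropy_eq_neg_sum_mul w w hsw.ne', crossEntropy_eq_neg_sum_mul w r hsw.ne',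
    mul_right_inj' (neg_ne_zero.2 hsw.ne'),
    sum_mul_log_eq_sum_mul_log_iff (fun i => div_pos (hw i) hsw) (fun i => div_pos (hr i) hsr)
      (by rw [sum_div_sum_self hsw.ne', sum_div_sum_self hsr.ne']),
    funext_iff]

end CrossEntropy

lemma log_one_add_sum_erase_div {ι : Type*} [Fintype ι] [DecidableEq ι] {r : ι → ℝ} {k : ι}
    (hk : r k ≠ 0) :
    log (1 + ∑ l ∈ univ.erase k, r l / r k) = -log (r k / ∑ l, r l) := by
  rw [← log_inv, inv_div, ← div_self hk, ← sum_div, ← add_div,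
    add_sum_erase _ _ (mem_univ k)]

theorem lsel_minimized_at_posterior_general
    {X : Type*} [Fintype X]
    {K : ℕ}
    -- strictly positive joint pmf on X × {1,…,K}
    (p : X × Fin K → ℝ)
    (hpos : ∀ z, 0 < p z)
    -- population LSEL
    (L : (X × Fin K → ℝ) → ℝ)
    (hL : ∀ q, L q = ∑ x : X, ∑ k : Fin K,
      p (x, k) * Real.log (1 + ∑ l ∈ Finset.univ.erase k, q (x, l) / q (x, k)))
    -- true posterior scores
    (qstar : X × Fin K → ℝ)
    (hqstar : ∀ x k, qstar (x, k) = p (x, k) / ∑ l : Fin K, p (x, l))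
    -- arbitrary positive score function
    (q : X × Fin K → ℝ) (hq : ∀ z, 0 < q z) :
    L qstar ≤ L q ∧
      (L q = L qstar ↔
        ∀ (x : X) (k : Fin K),
          q (x, k) / ∑ l : Fin K, q (x, l) = p (x, k) / ∑ l : Fin K, p (x, l)) := by
  have hL_crossEntropy : ∀ r : X × Fin K → ℝ, (∀ z, r z ≠ 0) →
      L r = ∑ x, crossEntropy (fun k => p (x, k)) (fun k => r (x, k)) := fun r hr => by
    rw [hL]
    refine sum_congr rfl fun x _ => sum_congr rfl fun k _ => ?_
    exact congrArg _ (log_one_add_sum_erase_div (r := fun l => r (x, l)) (hr (x, k)))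
  have hsum_pos : ∀ x (k : Fin K), 0 < ∑ l, p (x, l) := fun x k =>
    sum_pos (fun l _ => hpos _) ⟨k, mem_univ k⟩
  have hqstar_ne : ∀ z, qstar z ≠ 0 := fun ⟨x, k⟩ => by
    rw [hqstar]
    exact (div_pos (hpos _) (hsum_pos x k)).ne'
  have hLqstar : L qstar = ∑ x, crossEntropy (fun k => p (x, k)) (fun k => p (x, k)) := by
    rw [hL_crossEntropy qstar hqstar_ne]
    refine sum_congr rfl fun x _ => ?_
    rcases isEmpty_or_nonempty (Fin K) with _ | ⟨⟨k⟩⟩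
    · simp [crossEntropy]
    rw [funext (hqstar x), crossEntropy_div_const _ _ (hsum_pos x k).ne']
  have hle : ∀ x, crossEntropy (fun k => p (x, k)) (fun k => p (x, k))
      ≤ crossEntropy (fun k => p (x, k)) (fun k => q (x, k)) := fun x =>
    crossEntropy_self_le (fun k => hpos _) (fun k => hq _)
  rw [hL_crossEntropy q fun z => (hq z).ne', hLqstar, eq_comm,
    sum_eq_sum_iff_of_le fun x _ => hle x]
  refine ⟨sum_le_sum fun x _ => hle x, ?_⟩
  simp only [mem_univ, true_implies]
  exact forall_congr' fun x =>
    eq_comm.trans (crossEntropy_eq_self_iff (fun k => hpos _) (fun k => hq _))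

/-- The population log-sum-exponential loss (LSEL) is minimized exactly at the true
posteriors: for every positive score function `q`, `L q* ≤ L q` where
`q* (x, k) = p(k|x)`, with equality iff the softmax-normalized scores of `q`
coincide with the posteriors everywhere. -/
theorem lsel_minimized_at_posterior
    {X : Type*} [Fintype X] [Nonempty X]
    {K : ℕ} (hK : 2 ≤ K)
    -- strictly positive joint pmf on X × {1,…,K}
    (p : X × Fin K → ℝ)
    (hpos : ∀ z, 0 < p z)
    (hsum : ∑ z : X × Fin K, p z = 1)
    -- population LSEL
    (L : (X × Fin K → ℝ) → ℝ)
    (hL : ∀ q, L q = ∑ x : X, ∑ k : Fin K,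
      p (x, k) * Real.log (1 + ∑ l ∈ Finset.univ.erase k, q (x, l) / q (x, k)))
    -- true posterior scores
    (qstar : X × Fin K → ℝ)
    (hqstar : ∀ x k, qstar (x, k) = p (x, k) / ∑ l : Fin K, p (x, l))
    -- arbitrary positive score function
    (q : X × Fin K → ℝ) (hq : ∀ z, 0 < q z) :
    L qstar ≤ L q ∧
      (L q = L qstar ↔
        ∀ (x : X) (k : Fin K),
          q (x, k) / ∑ l : Fin K, q (x, l) = p (x, k) / ∑ l : Fin K, p (x, l)) :=
  lsel_minimized_at_posterior_general p hpos L hL qstar hqstar q hq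
end

section
/- For every α ≥ 0 and every x ≠ 0, the B2Bsqrt function is differentiable at x with derivative f_{B2Bsqrt}′(x) = 1/(2·√(α + |x|)). -/
/-- The back-to-back square root (B2Bsqrt) activation function with parameter `α ≥ 0`:
`f(x) = sign(x) * (√(α + |x|) - √α)`, where `sign 0 = 0`. -/
noncomputable def b2bsqrt (α : ℝ) (x : ℝ) : ℝ :=
  Real.sign x * (Real.sqrt (α + |x|) - Real.sqrt α)

/-!
Away from `0` the factor `sign y` is locally constant, so near `x` the function is
`sign x • g` with `g y = √(α + |y|) - √α`. The chain rule gives `g'(x) = sign x / (2√(α + |x|))`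
(as `α + |x| > 0`), and the two signs cancel since `sign x ^ 2 = 1`.
-/

open Filter Set Topology

namespace Real

theorem sign_eq_coe_signType_sign (x : ℝ) : Real.sign x = (SignType.sign x : ℝ) := by
  rcases lt_trichotomy x 0 with hneg | rfl | hpos
  · simp [sign_of_neg hneg, hneg]
  · simp
  · simp [sign_of_pos hpos, hpos]

theorem sign_mul_self_of_ne_zero {x : ℝ} (hx : x ≠ 0) : Real.sign x * Real.sign x = 1 := by
  nth_rw 2 [← inv_sign]
  exact mul_inv_cancel₀ (sign_eq_zero_iff.not.mpr hx)

theorem sign_eventuallyEq_of_ne_zero {x : ℝ} (hx : x ≠ 0) :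
    Real.sign =ᶠ[𝓝 x] fun _ ↦ Real.sign x := by
  rcases hx.lt_or_gt with hneg | hpos
  · filter_upwards [Iio_mem_nhds hneg] with y hy
    rw [sign_of_neg hy, sign_of_neg hneg]
  · filter_upwards [Ioi_mem_nhds hpos] with y hy
    rw [sign_of_pos hy, sign_of_pos hpos]

theorem hasDerivAt_abs_of_ne_zero {x : ℝ} (hx : x ≠ 0) : HasDerivAt (|·|) (Real.sign x) x := by
  simpa only [sign_eq_coe_signType_sign] using hasDerivAt_abs hx

end Real

theorem HasDerivAt.real_sign_mul {f : ℝ → ℝ} {f' x : ℝ} (hf : HasDerivAt f f' x) (hx : x ≠ 0) :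
    HasDerivAt (fun y ↦ Real.sign y * f y) (Real.sign x * f') x :=
  (hf.const_mul (Real.sign x)).congr_of_eventuallyEq <| by
    filter_upwards [Real.sign_eventuallyEq_of_ne_zero hx] with y hy
    rw [hy]

/-- For every `α ≥ 0` and every `x ≠ 0`, the B2Bsqrt function is differentiable at `x`
with derivative `1 / (2√(α + |x|))`. -/
theorem b2bsqrt_hasDerivAt_of_ne_zero (α : ℝ) (hα : 0 ≤ α) (x : ℝ) (hx : x ≠ 0) :
    HasDerivAt (b2bsqrt α) (1 / (2 * Real.sqrt (α + |x|))) x := by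
  have hpos : 0 < α + |x| := add_pos_of_nonneg_of_pos hα (abs_pos.mpr hx)
  have hg : HasDerivAt (fun y ↦ Real.sqrt (α + |y|) - Real.sqrt α)
      (Real.sign x / (2 * Real.sqrt (α + |x|))) x := by
    have := ((Real.hasDerivAt_sqrt hpos.ne').comp x
      ((Real.hasDerivAt_abs_of_ne_zero hx).const_add α)).sub_const (Real.sqrt α)
    rwa [mul_comm, ← mul_div_assoc, mul_one] at this
  have hf := hg.real_sign_mul hx
  rwa [← mul_div_assoc, Real.sign_mul_self_of_ne_zero hx] at hf
end

section
/- For every α > 0, the B2Bsqrt function is Lipschitz continuous on ℝ with Lipschitz constant 1/(2√α): for all x, y ∈ ℝ, |f_{B2Bsqrt}(x) − f_{B2Bsqrt}(y)| ≤ |x − y| / (2√α). -/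
lemma b2bsqrt_of_nonneg (α : ℝ) {x : ℝ} (hx : 0 ≤ x) :
    b2bsqrt α x = Real.sqrt (α + x) - Real.sqrt α := by
  rcases eq_or_lt_of_le hx with h | h
  · simp [b2bsqrt, ← h]
  · simp [b2bsqrt, Real.sign_of_pos h, abs_of_pos h]

lemma b2bsqrt_of_nonpos (α : ℝ) {x : ℝ} (hx : x ≤ 0) :
    b2bsqrt α x = -(Real.sqrt (α + (-x)) - Real.sqrt α) := by
  rcases eq_or_lt_of_le hx with h | h
  · simp [b2bsqrt, h]
  · simp [b2bsqrt, Real.sign_of_neg h, abs_of_neg h]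

lemma key_aux (α : ℝ) (hα : 0 < α) {a b : ℝ} (ha : 0 ≤ a) (hb : 0 ≤ b) (hba : b ≤ a) :
    Real.sqrt (α + a) - Real.sqrt (α + b) ≤ (a - b) / (2 * Real.sqrt α) := by
  have hu : 0 < Real.sqrt α := Real.sqrt_pos.mpr hα
  have hs : Real.sqrt α ≤ Real.sqrt (α + a) := Real.sqrt_le_sqrt (by linarith)
  have ht : Real.sqrt α ≤ Real.sqrt (α + b) := Real.sqrt_le_sqrt (by linarith)
  have hts : Real.sqrt (α + b) ≤ Real.sqrt (α + a) := Real.sqrt_le_sqrt (by linarith)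
  have hs2 : Real.sqrt (α + a) ^ 2 = α + a := Real.sq_sqrt (by linarith)
  have ht2 : Real.sqrt (α + b) ^ 2 = α + b := Real.sq_sqrt (by linarith)
  rw [le_div_iff₀ (by positivity)]
  nlinarith [mul_le_mul_of_nonneg_left (add_le_add hs ht)
    (sub_nonneg.mpr hts)]

lemma key (α : ℝ) (hα : 0 < α) {a b : ℝ} (ha : 0 ≤ a) (hb : 0 ≤ b) :
    |Real.sqrt (α + a) - Real.sqrt (α + b)| ≤ |a - b| / (2 * Real.sqrt α) := by
  rcases le_total b a with h | h
  · rw [abs_of_nonneg (sub_nonneg.mpr (Real.sqrt_le_sqrt (by linarith))),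
      abs_of_nonneg (sub_nonneg.mpr h)]
    exact key_aux α hα ha hb h
  · rw [abs_sub_comm, abs_sub_comm a b,
      abs_of_nonneg (sub_nonneg.mpr (Real.sqrt_le_sqrt (by linarith))),
      abs_of_nonneg (sub_nonneg.mpr h)]
    exact key_aux α hα hb ha h

lemma key2 (α : ℝ) (hα : 0 < α) {a b : ℝ} (ha : 0 ≤ a) (hb : 0 ≤ b) :
    (Real.sqrt (α + a) - Real.sqrt α) + (Real.sqrt (α + b) - Real.sqrt α)
      ≤ (a + b) / (2 * Real.sqrt α) := by
  have h1 := key_aux α hα ha le_rfl ha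
  have h2 := key_aux α hα hb le_rfl hb
  simp only [add_zero, sub_zero] at h1 h2
  have : (a + b) / (2 * Real.sqrt α) = a / (2 * Real.sqrt α) + b / (2 * Real.sqrt α) := by
    ring
  linarith [this ▸ add_le_add h1 h2]

/-- For every `α > 0`, the B2Bsqrt function is Lipschitz continuous on ℝ with Lipschitz
constant `1 / (2√α)`. -/
theorem b2bsqrt_lipschitz (α : ℝ) (hα : 0 < α) (x y : ℝ) :
    |b2bsqrt α x - b2bsqrt α y| ≤ |x - y| / (2 * Real.sqrt α) := by
  have hu : 0 < Real.sqrt α := Real.sqrt_pos.mpr hα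
  rcases le_total 0 x with hx | hx <;> rcases le_total 0 y with hy | hy
  · rw [b2bsqrt_of_nonneg α hx, b2bsqrt_of_nonneg α hy,
      show Real.sqrt (α + x) - Real.sqrt α - (Real.sqrt (α + y) - Real.sqrt α)
        = Real.sqrt (α + x) - Real.sqrt (α + y) by ring]
    exact key α hα hx hy
  · rw [b2bsqrt_of_nonneg α hx, b2bsqrt_of_nonpos α hy]
    have hx' : Real.sqrt α ≤ Real.sqrt (α + x) := Real.sqrt_le_sqrt (by linarith)
    have hy' : Real.sqrt α ≤ Real.sqrt (α + (-y)) := Real.sqrt_le_sqrt (by linarith)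
    rw [abs_of_nonneg (by linarith), abs_of_nonneg (by linarith)]
    have := key2 α hα hx (show (0:ℝ) ≤ -y by linarith)
    calc Real.sqrt (α + x) - Real.sqrt α - -(Real.sqrt (α + (-y)) - Real.sqrt α)
        = (Real.sqrt (α + x) - Real.sqrt α) + (Real.sqrt (α + (-y)) - Real.sqrt α) := by ring
      _ ≤ (x + (-y)) / (2 * Real.sqrt α) := this
      _ = (x - y) / (2 * Real.sqrt α) := by ring
  · rw [b2bsqrt_of_nonpos α hx, b2bsqrt_of_nonneg α hy]
    have hx' : Real.sqrt α ≤ Real.sqrt (α + (-x)) := Real.sqrt_le_sqrt (by linarith)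
    have hy' : Real.sqrt α ≤ Real.sqrt (α + y) := Real.sqrt_le_sqrt (by linarith)
    rw [abs_of_nonpos (by linarith), abs_of_nonpos (by linarith)]
    have := key2 α hα (show (0:ℝ) ≤ -x by linarith) hy
    calc -(-(Real.sqrt (α + (-x)) - Real.sqrt α) - (Real.sqrt (α + y) - Real.sqrt α))
        = (Real.sqrt (α + (-x)) - Real.sqrt α) + (Real.sqrt (α + y) - Real.sqrt α) := by ring
      _ ≤ ((-x) + y) / (2 * Real.sqrt α) := this
      _ = -(x - y) / (2 * Real.sqrt α) := by ring
  · rw [b2bsqrt_of_nonpos α hx, b2bsqrt_of_nonpos α hy,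
      show -(Real.sqrt (α + (-x)) - Real.sqrt α) - -(Real.sqrt (α + (-y)) - Real.sqrt α)
        = Real.sqrt (α + (-y)) - Real.sqrt (α + (-x)) by ring,
      show |x - y| = |(-y) - (-x)| by rw [show (-y) - (-x) = x - y by ring]]
    exact key α hα (by linarith) (by linarith)
end
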